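/- arXiv:1803.05826 — 2 statements merged into one kernel-verified Lean document; each statement's English description precedes it below -/
import Mathlib

section
/- Let (A, ∘, ·) be a skew brace. Define r: A × A → A × A by r(a, b) = (λ_a(b), \overline{λ_a(b)} ∘ a ∘ b) where λ_a(b) = a⁻¹ · (a ∘ b) and x̄ is the ∘-inverse of x. Then r is a braiding operator on (A, ∘): it satisfies r(m × id) = (id × m)(r × id)(id × r), r(id × m) = (m × id)(id × r)(r × id), the unit conditions, and m ∘ r = m. -/
structure SkewBrace (A : Type*) where
  circ : A → A → A
  cinv : A → A
  ce : A
  mul : A → A → A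
  inv : A → A
  e : A
  circ_assoc : ∀ a b c, circ (circ a b) c = circ a (circ b c)
  ce_circ : ∀ a, circ ce a = a
  circ_ce : ∀ a, circ a ce = a
  cinv_circ : ∀ a, circ (cinv a) a = ce
  circ_cinv : ∀ a, circ a (cinv a) = ce
  mul_assoc : ∀ a b c, mul (mul a b) c = mul a (mul b c)
  e_mul : ∀ a, mul e a = a
  mul_e : ∀ a, mul a e = a
  inv_mul : ∀ a, mul (inv a) a = e
  mul_inv : ∀ a, mul a (inv a) = e
  distrib : ∀ a b c, circ a (mul b c) = mul (mul (circ a b) (inv a)) (circ a c)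

def SkewBrace.lam {A : Type*} (B : SkewBrace A) (a b : A) : A :=
  B.mul (B.inv a) (B.circ a b)

def SkewBrace.rho {A : Type*} (B : SkewBrace A) (a b : A) : A :=
  B.mul (B.circ a b) (B.inv a)

/-!
Writing `λ_a(b) = a⁻¹ · (a ∘ b)`, one has `a ∘ b = a · λ_a(b)`, and the brace axiom says that
each `λ_a` is an automorphism of `(A, ·)` and that `a ↦ λ_a` is a homomorphism from `(A, ∘)`.
For any group `G` and any `f : G → G → G`, the factorization map
`r(a, b) = (f a b, (f a b)⁻¹ a b)`, which refactors `a b` with first factor `f a b`, satisfies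
`m ∘ r = m`, and the two braid relations reduce to `f (a b) c = f a (f b c)` and
`f a (b c) = f a b · f ((f a b)⁻¹ a b) c`. For `f = λ` the first is the homomorphism property,
and the second follows from it together with `b ∘ c = b · λ_b(c)`.
-/

section FactorizationMap

variable {G : Type*} [Group G] {f : G → G → G} {r : G × G → G × G}

theorem mul_factorizationMap (hr : ∀ a b, r (a, b) = (f a b, (f a b)⁻¹ * (a * b))) (a b : G) :
    (r (a, b)).1 * (r (a, b)).2 = a * b := by
  simp only [hr, mul_inv_cancel_left]

theorem factorizationMap_mul_left (hr : ∀ a b, r (a, b) = (f a b, (f a b)⁻¹ * (a * b)))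
    (hf : ∀ a b c, f (a * b) c = f a (f b c)) (a b c : G) :
    r (a * b, c) = ((r (a, (r (b, c)).1)).1, (r (a, (r (b, c)).1)).2 * (r (b, c)).2) := by
  simp only [hr, hf, Prod.mk.injEq, true_and]
  group

theorem factorizationMap_mul_right (hr : ∀ a b, r (a, b) = (f a b, (f a b)⁻¹ * (a * b)))
    (hf : ∀ a b c, f a (b * c) = f a b * f ((f a b)⁻¹ * (a * b)) c) (a b c : G) :
    r (a, b * c) = ((r (a, b)).1 * (r ((r (a, b)).2, c)).1, (r ((r (a, b)).2, c)).2) := by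
  simp only [hr, hf, Prod.mk.injEq, true_and]
  group

theorem factorizationMap_one_right (hr : ∀ a b, r (a, b) = (f a b, (f a b)⁻¹ * (a * b)))
    (hf : ∀ a, f a 1 = 1) (a : G) : r (a, 1) = (1, a) := by
  simp only [hr, hf, inv_one, mul_one, one_mul]

theorem factorizationMap_one_left (hr : ∀ a b, r (a, b) = (f a b, (f a b)⁻¹ * (a * b)))
    (hf : ∀ a, f 1 a = a) (a : G) : r (1, a) = (a, 1) := by
  simp only [hr, hf, one_mul, inv_mul_cancel]

end FactorizationMap

namespace SkewBrace

variable {A : Type*} (B : SkewBrace A)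

def Circ (_B : SkewBrace A) : Type _ := A

def Dot (_B : SkewBrace A) : Type _ := A

instance : Group B.Circ where
  mul := B.circ
  one := B.ce
  inv := B.cinv
  mul_assoc := B.circ_assoc
  one_mul := B.ce_circ
  mul_one := B.circ_ce
  inv_mul_cancel := B.cinv_circ

instance : Group B.Dot where
  mul := B.mul
  one := B.e
  inv := B.inv
  mul_assoc := B.mul_assoc
  one_mul := B.e_mul
  mul_one := B.mul_e
  inv_mul_cancel := B.inv_mul

def toCirc (a : A) : B.Circ := a

def toDot (a : A) : B.Dot := a

theorem toCirc_injective : Function.Injective B.toCirc := fun _ _ h => h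

theorem toDot_injective : Function.Injective B.toDot := fun _ _ h => h

@[simp] theorem toCirc_circ (a b : A) : B.toCirc (B.circ a b) = B.toCirc a * B.toCirc b := rfl

@[simp] theorem toCirc_cinv (a : A) : B.toCirc (B.cinv a) = (B.toCirc a)⁻¹ := rfl

@[simp] theorem toDot_mul (a b : A) : B.toDot (B.mul a b) = B.toDot a * B.toDot b := rfl

@[simp] theorem toDot_inv (a : A) : B.toDot (B.inv a) = (B.toDot a)⁻¹ := rfl

@[simp] theorem toDot_e : B.toDot B.e = 1 := rfl

@[simp] theorem toDot_lam (a b : A) :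
    B.toDot (B.lam a b) = (B.toDot a)⁻¹ * B.toDot (B.circ a b) := rfl

theorem circ_e (a : A) : B.circ a B.e = a := by
  have h : B.circ a B.e = B.mul (B.mul (B.circ a B.e) (B.inv a)) (B.circ a B.e) := by
    simpa only [B.e_mul] using B.distrib a B.e B.e
  apply B.toDot_injective
  simpa only [toDot_mul, toDot_inv, right_eq_mul, mul_inv_eq_one] using congrArg B.toDot h

theorem e_eq_ce : B.e = B.ce := by
  simpa only [B.ce_circ] using B.circ_e B.ce

theorem circ_eq_mul_lam (a b : A) : B.circ a b = B.mul a (B.lam a b) := by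
  apply B.toDot_injective
  simp only [toDot_mul, toDot_lam, mul_inv_cancel_left]

theorem lam_mul (a b c : A) : B.lam a (B.mul b c) = B.mul (B.lam a b) (B.lam a c) := by
  apply B.toDot_injective
  simp only [toDot_lam, toDot_mul, B.distrib, toDot_inv]
  group

theorem lam_ce_right (a : A) : B.lam a B.ce = B.ce := by
  rw [← B.e_eq_ce, lam, B.circ_e, B.inv_mul]

theorem lam_ce_left (a : A) : B.lam B.ce a = a := by
  apply B.toDot_injective
  rw [toDot_lam, B.ce_circ, ← B.e_eq_ce, toDot_e, inv_one, one_mul]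

theorem lam_inv (a b : A) : B.lam a (B.inv b) = B.inv (B.lam a b) := by
  have h : B.toDot (B.lam a b) * B.toDot (B.lam a (B.inv b)) = 1 := by
    rw [← toDot_mul, ← lam_mul, B.mul_inv, B.e_eq_ce, lam_ce_right, ← B.e_eq_ce, toDot_e]
  exact B.toDot_injective (eq_inv_of_mul_eq_one_right h)

theorem lam_circ_left (a b c : A) : B.lam (B.circ a b) c = B.lam a (B.lam b c) := by
  have h : B.circ a (B.lam b c) =
      B.mul (B.mul (B.circ a (B.inv b)) (B.inv a)) (B.circ a (B.circ b c)) := by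
    rw [lam, B.distrib]
  apply B.toDot_injective
  rw [toDot_lam, toDot_lam, h, B.circ_eq_mul_lam a (B.inv b), lam_inv, B.circ_assoc,
    B.circ_eq_mul_lam a b]
  simp only [toDot_mul, toDot_inv, toDot_lam]
  group

/-- The second braid relation for `λ`: with `u = λ_a(b)` and `v = ū ∘ a ∘ b` one has
`u ∘ v = a ∘ b`, so `u ∘ λ_v(c) = u · λ_{a ∘ b}(c) = λ_a(b) · λ_a(λ_b(c)) = λ_a(b ∘ c)`. -/
theorem lam_circ_right (a b c : A) :
    B.lam a (B.circ b c) =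
      B.circ (B.lam a b) (B.lam (B.circ (B.cinv (B.lam a b)) (B.circ a b)) c) := by
  have h : B.circ (B.lam a b) (B.circ (B.cinv (B.lam a b)) (B.circ a b)) = B.circ a b := by
    apply B.toCirc_injective
    simp only [toCirc_circ, toCirc_cinv, mul_inv_cancel_left]
  rw [B.circ_eq_mul_lam (B.lam a b), ← lam_circ_left, h, lam_circ_left, ← lam_mul,
    ← circ_eq_mul_lam]

end SkewBrace

/-- The map `r(a,b) = (λ_a(b), 𝜆_a(b)‾ ∘ a ∘ b)` associated to a skew brace
is a braiding operator on `(A, ∘)`. -/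
theorem skewBrace_gives_braiding {A : Type*} (B : SkewBrace A)
    (r : A × A → A × A)
    (hr : ∀ a b, r (a, b) =
      (B.lam a b, B.circ (B.cinv (B.lam a b)) (B.circ a b))) :
    (∀ a b c, r (B.circ a b, c) =
      ((r (a, (r (b, c)).1)).1, B.circ (r (a, (r (b, c)).1)).2 (r (b, c)).2)) ∧
    (∀ a b c, r (a, B.circ b c) =
      (B.circ (r (a, b)).1 (r ((r (a, b)).2, c)).1, (r ((r (a, b)).2, c)).2)) ∧
    (∀ a, r (a, B.ce) = (B.ce, a)) ∧
    (∀ a, r (B.ce, a) = (a, B.ce)) ∧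
    (∀ a b, B.circ (r (a, b)).1 (r (a, b)).2 = B.circ a b) := by
  exact ⟨factorizationMap_mul_left (G := B.Circ) (f := B.lam) hr B.lam_circ_left,
    factorizationMap_mul_right (G := B.Circ) (f := B.lam) hr B.lam_circ_right,
    factorizationMap_one_right (G := B.Circ) (f := B.lam) hr B.lam_ce_right,
    factorizationMap_one_left (G := B.Circ) (f := B.lam) hr B.lam_ce_left,
    mul_factorizationMap (G := B.Circ) (f := B.lam) hr⟩
end

section
/- Let (A, ∘, r) be a group with braiding and (X, m_X, k) a generalized braided action (k satisfies the reflection equation with respect to r together with relations k(m_A × id) = (m_A × id)(id × k)(r × id)(id × k), k(id × m_X) = (id × m_X)(r × id)(id × k)(r × id), and k(e, x) = (e, x)). Define k_Y = (r × id_X)(id_A × k)(r × id_X) on A × (A × X). Then k_Y satisfies the reflection equation with respect to r over the set Y = A × X. -/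
structure BraidedGroup (A : Type*) where
  circ : A → A → A
  cinv : A → A
  ce : A
  circ_assoc : ∀ a b c, circ (circ a b) c = circ a (circ b c)
  ce_circ : ∀ a, circ ce a = a
  circ_ce : ∀ a, circ a ce = a
  cinv_circ : ∀ a, circ (cinv a) a = ce
  circ_cinv : ∀ a, circ a (cinv a) = ce
  r : A × A → A × A
  r_rule1 : ∀ a b c : A,
    r (circ a b, c) =
      ((r (a, (r (b, c)).1)).1, circ (r (a, (r (b, c)).1)).2 (r (b, c)).2)
  r_rule2 : ∀ a b c : A,
    r (a, circ b c) =
      (circ (r (a, b)).1 (r ((r (a, b)).2, c)).1, (r ((r (a, b)).2, c)).2)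
  r_unit1 : ∀ a, r (a, ce) = (ce, a)
  r_unit2 : ∀ a, r (ce, a) = (a, ce)
  r_comp : ∀ a b, circ (r (a, b)).1 (r (a, b)).2 = circ a b

/-- `r` acting on the first two tensor factors. -/
def stepR {A X : Type*} (r : A × A → A × A) (p : A × A × X) : A × A × X :=
  ((r (p.1, p.2.1)).1, (r (p.1, p.2.1)).2, p.2.2)

/-- a map `k : A × X → A × X` acting on the last two tensor factors. -/
def stepK {A X : Type*} (k : A × X → A × X) (p : A × A × X) : A × A × X :=
  (p.1, k p.2)

/-- the multiplication `m × id`. -/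
def collM {A X : Type*} (m : A → A → A) (p : A × A × X) : A × X :=
  (m p.1 p.2.1, p.2.2)

/-- the action `id × m_X`. -/
def collMX {A X : Type*} (mX : A → X → X) (p : A × A × X) : A × X :=
  (p.1, mX p.2.1 p.2.2)

/-!
Write `s = r₁₂`, `t = r₂₃` and `κ = k₃₄` for the operators on `A × A × A × X`. Then
`id × k_Y = t κ t`, and the reflection equation for `k_Y` reduces, in the semigroup of
self-maps, to the braid relation `s t s = t s t` (which the axioms of a braided group
imply), the commutation `s κ = κ s` of operators acting on disjoint factors, and the
reflection equation `t κ t κ = κ t κ t` for `k`.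
-/

theorem reflection_of_conj_braid {M : Type*} [Semigroup M] {s t κ : M}
    (braid : s * t * s = t * s * t) (comm : s * κ = κ * s)
    (reflection : t * κ * t * κ = κ * t * κ * t) :
    s * (t * κ * t) * s * (t * κ * t) = t * κ * t * s * (t * κ * t) * s :=
  calc s * (t * κ * t) * s * (t * κ * t)
      = s * t * κ * (t * s * t) * κ * t := by simp only [mul_assoc]
    _ = s * t * (κ * s) * t * s * κ * t := by rw [← braid]; simp only [mul_assoc]
    _ = s * t * s * κ * t * (s * κ) * t := by rw [← comm]; simp only [mul_assoc]
    _ = s * t * s * κ * t * κ * s * t := by rw [comm]; simp only [mul_assoc]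
    _ = t * s * (t * κ * t * κ) * s * t := by rw [braid]; simp only [mul_assoc]
    _ = t * s * κ * t * κ * (t * s * t) := by rw [reflection]; simp only [mul_assoc]
    _ = t * (s * κ) * t * κ * s * t * s := by rw [← braid]; simp only [mul_assoc]
    _ = t * κ * s * t * (κ * s) * t * s := by rw [comm]; simp only [mul_assoc]
    _ = t * κ * (s * t * s) * κ * t * s := by rw [← comm]; simp only [mul_assoc]
    _ = t * κ * t * s * (t * κ * t) * s := by rw [braid]; simp only [mul_assoc]

namespace BraidedGroup

variable {A : Type*} (G : BraidedGroup A)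

def σ (a b : A) : A := (G.r (a, b)).1

def τ (a b : A) : A := (G.r (a, b)).2

variable {G}

theorem circ_left_cancel {a x y : A} (h : G.circ a x = G.circ a y) : x = y := by
  have h' := congrArg (G.circ (G.cinv a)) h
  rwa [← G.circ_assoc, ← G.circ_assoc, G.cinv_circ, G.ce_circ, G.ce_circ] at h'

theorem circ_right_cancel {a x y : A} (h : G.circ x a = G.circ y a) : x = y := by
  have h' := congrArg (G.circ · (G.cinv a)) h
  simpa only [G.circ_assoc, G.circ_cinv, G.circ_ce] using h'

variable (G)

theorem circ_σ_τ (a b : A) : G.circ (G.σ a b) (G.τ a b) = G.circ a b := G.r_comp a b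

theorem σ_circ_left (a b c : A) : G.σ (G.circ a b) c = G.σ a (G.σ b c) := by
  unfold σ
  exact (congrArg Prod.fst (G.r_rule1 a b c) :)

theorem τ_circ_right (a b c : A) : G.τ a (G.circ b c) = G.τ (G.τ a b) c := by
  unfold τ
  exact (congrArg Prod.snd (G.r_rule2 a b c) :)

theorem σ_braid (a b c : A) :
    G.σ (G.σ a b) (G.σ (G.τ a b) c) = G.σ a (G.σ b c) := by
  rw [← σ_circ_left, circ_σ_τ, σ_circ_left]

theorem τ_braid (a b c : A) :
    G.τ (G.τ a b) c = G.τ (G.τ a (G.σ b c)) (G.τ b c) := by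
  rw [← τ_circ_right, ← circ_σ_τ G b c, τ_circ_right]

/-- Both sides of the braid relation preserve the product `a ∘ b ∘ c`, and their outer
components agree by `σ_braid` and `τ_braid`; cancelling these gives the middle one. -/
theorem σ_τ_braid (a b c : A) :
    G.τ (G.σ a b) (G.σ (G.τ a b) c) = G.σ (G.τ a (G.σ b c)) (G.τ b c) := by
  have hL : G.circ (G.σ a (G.σ b c))
      (G.circ (G.τ (G.σ a b) (G.σ (G.τ a b) c)) (G.τ (G.τ a (G.σ b c)) (G.τ b c))) =
      G.circ a (G.circ b c) := by
    rw [← σ_braid G a b c, ← τ_braid G a b c, ← G.circ_assoc, circ_σ_τ, G.circ_assoc,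
      circ_σ_τ G (G.τ a b) c, ← G.circ_assoc, circ_σ_τ G a b, G.circ_assoc]
  have hR : G.circ (G.σ a (G.σ b c))
      (G.circ (G.σ (G.τ a (G.σ b c)) (G.τ b c)) (G.τ (G.τ a (G.σ b c)) (G.τ b c))) =
      G.circ a (G.circ b c) := by
    rw [circ_σ_τ G (G.τ a (G.σ b c)) (G.τ b c), ← G.circ_assoc, circ_σ_τ G a (G.σ b c),
      G.circ_assoc, circ_σ_τ G b c]
  exact circ_right_cancel (circ_left_cancel (hL.trans hR.symm))

theorem stepR_braid {X : Type*} (q : A × A × A × X) :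
    stepR G.r (stepK (stepR G.r) (stepR G.r q)) =
      stepK (stepR G.r) (stepR G.r (stepK (stepR G.r) q)) := by
  obtain ⟨a, b, c, x⟩ := q
  exact Prod.ext (σ_braid G a b c)
    (Prod.ext (σ_τ_braid G a b c) (Prod.ext (τ_braid G a b c) rfl))

end BraidedGroup

theorem amplified_solves_reflection_general {A X : Type*} (G : BraidedGroup A)
    (k : A × X → A × X)
    (href : ∀ p : A × A × X,
      stepR G.r (stepK k (stepR G.r (stepK k p))) =
        stepK k (stepR G.r (stepK k (stepR G.r p))))
    (kY : A × (A × X) → A × (A × X))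
    (hkY : ∀ q, kY q = stepR G.r (stepK k (stepR G.r q))) :
    ∀ p : A × A × (A × X),
      stepR G.r (stepK kY (stepR G.r (stepK kY p))) =
        stepK kY (stepR G.r (stepK kY (stepR G.r p))) := by
  let s : Function.End (A × A × A × X) := stepR G.r
  let t : Function.End (A × A × A × X) := stepK (stepR G.r)
  let κ : Function.End (A × A × A × X) := stepK (stepK k)
  have hkY' : (stepK kY : Function.End (A × A × A × X)) = t * κ * t :=
    funext fun q => congrArg (Prod.mk q.1) (hkY q.2)
  have braid : s * t * s = t * s * t := funext (BraidedGroup.stepR_braid G)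
  have comm : s * κ = κ * s := rfl
  have reflection : t * κ * t * κ = κ * t * κ * t :=
    funext fun q => congrArg (Prod.mk q.1) (href q.2)
  rw [hkY']
  exact congrFun (reflection_of_conj_braid braid comm reflection)

/-- For a generalized braided action `(X, m_X, k)`, the amplified map
`k_Y = (r × id)(id × k)(r × id)` satisfies the reflection equation over `Y = A × X`. -/
theorem amplified_solves_reflection {A X : Type*} (G : BraidedGroup A)
    (mX : A → X → X)
    (hmX_e : ∀ x, mX G.ce x = x)
    (hmX : ∀ a b x, mX (G.circ a b) x = mX a (mX b x))
    (k : A × X → A × X)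
    (h1 : ∀ p : A × A × X,
      k (collM G.circ p) = collM G.circ (stepK k (stepR G.r (stepK k p))))
    (h2 : ∀ p : A × A × X,
      k (collMX mX p) = collMX mX (stepR G.r (stepK k (stepR G.r p))))
    (h3 : ∀ x : X, k (G.ce, x) = (G.ce, x))
    (href : ∀ p : A × A × X,
      stepR G.r (stepK k (stepR G.r (stepK k p))) =
        stepK k (stepR G.r (stepK k (stepR G.r p))))
    (kY : A × (A × X) → A × (A × X))
    (hkY : ∀ q, kY q = stepR G.r (stepK k (stepR G.r q))) :
    ∀ p : A × A × (A × X),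
      stepR G.r (stepK kY (stepR G.r (stepK kY p))) =
        stepK kY (stepR G.r (stepK kY (stepR G.r p))) :=
  amplified_solves_reflection_general G k href kY hkY
end
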